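/- Let Y(t) be an n×n real matrix-valued function of the form Y(t) = Φ(t) · blockDiag(e^{Λt}, 1), where Φ is T-periodic (Φ(t+T) = Φ(t) for all t), Λ is an (n-1)×(n-1) real matrix, and blockDiag(e^{Λt},1) denotes the block-diagonal matrix with upper-left block e^{Λt} and lower-right entry 1. Let P be the projection onto the first n-1 coordinates (P ζ sets the last coordinate to 0). Suppose z₀ : ℝ → ℝⁿ satisfies ⟨Y(θ+T) P ζ̂, z₀(θ)⟩ = ⟨Y(θ) P ζ̂, z₀(θ)⟩ for all θ and all ζ̂, and assume I - e^{ΛT} is invertible. Then ⟨Y(θ) P ζ, z₀(θ)⟩ = 0 for all θ ∈ [0,T] and all ζ ∈ ℝⁿ. -/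

import Mathlib

/-!
By the Floquet form, `Y (θ + T) = Y θ * fromBlocks (exp (T • Λ)) 0 0 1`, so Perron's identity says
that the linear functional `v ↦ ⟨Y θ (v, 0), z₀ θ⟩` is invariant under `exp (T • Λ)`. It therefore
vanishes on the range of `1 - exp (T • Λ)`, which is the whole space.
-/

open Matrix

theorem AddMonoidHom.eq_zero_of_map_mulVec_eq_of_isUnit_one_sub {n R M : Type*} [Fintype n]
    [DecidableEq n] [CommRing R] [AddCommGroup M] (f : (n → R) →+ M) {E : Matrix n n R}
    (hE : IsUnit (1 - E)) (hf : ∀ v, f (E *ᵥ v) = f v) : f = 0 := by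
  refine AddMonoidHom.ext fun v => ?_
  obtain ⟨u, rfl⟩ := mulVec_surjective_iff_isUnit.2 hE v
  rw [sub_mulVec, one_mulVec, map_sub, hf, sub_self, zero_apply]

theorem Matrix.exp_add_smul {ι : Type*} [Fintype ι] [DecidableEq ι] (Λ : Matrix ι ι ℝ) (s t : ℝ) :
    NormedSpace.exp ((s + t) • Λ) = NormedSpace.exp (s • Λ) * NormedSpace.exp (t • Λ) := by
  rw [add_smul]
  exact exp_add_of_commute _ _ (((Commute.refl Λ).smul_left s).smul_right t)

theorem Matrix.fromBlocks_mulVec_sumElim_zero {ι κ α : Type*} [Fintype ι] [Fintype κ]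
    [NonUnitalNonAssocSemiring α] (A : Matrix ι ι α) (D : Matrix κ κ α) (v : ι → α) :
    fromBlocks A 0 0 D *ᵥ Sum.elim v 0 = Sum.elim (A *ᵥ v) 0 := by
  simp only [fromBlocks_mulVec, Sum.elim_comp_inl, Sum.elim_comp_inr, zero_mulVec, mulVec_zero,
    add_zero]

theorem floquet_add_period {ι κ : Type*} [Fintype ι] [DecidableEq ι] [Fintype κ] [DecidableEq κ]
    {T : ℝ} {Φ Y : ℝ → Matrix (ι ⊕ κ) (ι ⊕ κ) ℝ} {Λ : Matrix ι ι ℝ}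
    (hΦ : ∀ t, Φ (t + T) = Φ t)
    (hY : ∀ t, Y t = Φ t * fromBlocks (NormedSpace.exp (t • Λ)) 0 0 1) (t : ℝ) :
    Y (t + T) = Y t * fromBlocks (NormedSpace.exp (T • Λ)) 0 0 1 := by
  rw [hY, hY, hΦ, mul_assoc, fromBlocks_multiply, exp_add_smul]
  simp

theorem stmt0_general (m : ℕ) (T : ℝ)
    (Φ : ℝ → Matrix (Fin m ⊕ Unit) (Fin m ⊕ Unit) ℝ)
    (Λ : Matrix (Fin m) (Fin m) ℝ)
    (hΦ : ∀ t, Φ (t + T) = Φ t)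
    (Y : ℝ → Matrix (Fin m ⊕ Unit) (Fin m ⊕ Unit) ℝ)
    (hY : ∀ t, Y t = Φ t * Matrix.fromBlocks (NormedSpace.exp (t • Λ)) 0 0 1)
    (P : (Fin m ⊕ Unit → ℝ) → (Fin m ⊕ Unit → ℝ))
    (hP : ∀ ζ, P ζ = Sum.elim (fun j => ζ (Sum.inl j)) (fun _ => 0))
    (z₀ : ℝ → Fin m ⊕ Unit → ℝ)
    (hperron : ∀ (θ : ℝ) (ζ : Fin m ⊕ Unit → ℝ),
      (Y (θ + T) *ᵥ P ζ) ⬝ᵥ z₀ θ = (Y θ *ᵥ P ζ) ⬝ᵥ z₀ θ)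
    (hinv : IsUnit (1 - NormedSpace.exp (T • Λ))) :
    ∀ θ ∈ Set.Icc (0:ℝ) T, ∀ ζ : Fin m ⊕ Unit → ℝ, (Y θ *ᵥ P ζ) ⬝ᵥ z₀ θ = 0 := by
  intro θ _ ζ
  let f : (Fin m → ℝ) →+ ℝ := AddMonoidHom.mk' (fun v => (Y θ *ᵥ Sum.elim v 0) ⬝ᵥ z₀ θ)
    fun u v => by rw [← add_dotProduct, ← mulVec_add, ← Sum.elim_add_add, add_zero]
  have hP_extend : ∀ v, P (Sum.elim v 0) = Sum.elim v 0 := fun v => hP _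
  have hf : ∀ v, f (NormedSpace.exp (T • Λ) *ᵥ v) = f v := fun v => by
    have h := hperron θ (Sum.elim v 0)
    rwa [hP_extend, floquet_add_period hΦ hY, ← mulVec_mulVec, fromBlocks_mulVec_sumElim_zero] at h
  rw [hP]
  exact DFunLike.congr_fun (f.eq_zero_of_map_mulVec_eq_of_isUnit_one_sub hinv hf) (ζ ∘ Sum.inl)

theorem stmt0 (m : ℕ) (T : ℝ) (hT : 0 < T)
    (Φ : ℝ → Matrix (Fin m ⊕ Unit) (Fin m ⊕ Unit) ℝ)
    (Λ : Matrix (Fin m) (Fin m) ℝ)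
    (hΦ : ∀ t, Φ (t + T) = Φ t)
    (Y : ℝ → Matrix (Fin m ⊕ Unit) (Fin m ⊕ Unit) ℝ)
    (hY : ∀ t, Y t = Φ t * Matrix.fromBlocks (NormedSpace.exp (t • Λ)) 0 0 1)
    (P : (Fin m ⊕ Unit → ℝ) → (Fin m ⊕ Unit → ℝ))
    (hP : ∀ ζ, P ζ = Sum.elim (fun j => ζ (Sum.inl j)) (fun _ => 0))
    (z₀ : ℝ → Fin m ⊕ Unit → ℝ)
    (hperron : ∀ (θ : ℝ) (ζ : Fin m ⊕ Unit → ℝ),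
      (Y (θ + T) *ᵥ P ζ) ⬝ᵥ z₀ θ = (Y θ *ᵥ P ζ) ⬝ᵥ z₀ θ)
    (hinv : IsUnit (1 - NormedSpace.exp (T • Λ))) :
    ∀ θ ∈ Set.Icc (0:ℝ) T, ∀ ζ : Fin m ⊕ Unit → ℝ, (Y θ *ᵥ P ζ) ⬝ᵥ z₀ θ = 0 :=
  stmt0_general m T Φ Λ hΦ Y hY P hP z₀ hperron hinv
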